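/- Let Ω ⊆ ℝ² be open and connected, let f : Ω → ℝ³ be differentiable, and let ε₁, ε₂ : Ω → ℝ³ be differentiable maps each satisfying the homogeneous system ∂₁ε = 2ε × ∂₂f and ∂₂ε = −2ε × ∂₁f on Ω, where × is the cross product on ℝ³. Then the inner product ⟨ε₁, ε₂⟩ is constant on Ω; in particular the length |ε₁| is constant on Ω. -/

import Mathlib

open scoped RealInnerProductSpace ContDiff

/-- First partial derivative (in the first coordinate direction of `ℝ × ℝ`). -/
noncomputable def pd1 {E : Type*} [NormedAddCommGroup E] [NormedSpace ℝ E]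
    (f : ℝ × ℝ → E) : ℝ × ℝ → E := fun p => fderiv ℝ f p (1, 0)

/-- Second partial derivative (in the second coordinate direction of `ℝ × ℝ`). -/
noncomputable def pd2 {E : Type*} [NormedAddCommGroup E] [NormedSpace ℝ E]
    (f : ℝ × ℝ → E) : ℝ × ℝ → E := fun p => fderiv ℝ f p (0, 1)

/-- The standard cross product on `ℝ³`. -/
def cross3 (a b : EuclideanSpace ℝ (Fin 3)) : EuclideanSpace ℝ (Fin 3) := WithLp.toLp 2 (crossProduct a b)

/-!
Both solutions are rotated infinitesimally by the same vector field: along each coordinate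
direction `∂ᵢε = ε × wᵢ` with `w₁ = 2 ∂₂f`, `w₂ = -2 ∂₁f`. Since `v ↦ v × w` is skew-adjoint,
`∂ᵢ⟪ε₁, ε₂⟫ = ⟪ε₁ × wᵢ, ε₂⟫ + ⟪ε₁, ε₂ × wᵢ⟫ = 0`, so `⟪ε₁, ε₂⟫` has vanishing derivative on the
connected open set `Ω` and is constant there. The length statement is the case `ε₂ = ε₁`.
-/

def IsHomogeneousSolutionAt (f ε : ℝ × ℝ → EuclideanSpace ℝ (Fin 3)) (p : ℝ × ℝ) : Prop :=
  pd1 ε p = (2 : ℝ) • cross3 (ε p) (pd2 f p) ∧ pd2 ε p = -((2 : ℝ) • cross3 (ε p) (pd1 f p))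

theorem inner_cross3_left_add_inner_cross3_right (a b w : EuclideanSpace ℝ (Fin 3)) :
    ⟪cross3 a w, b⟫ + ⟪a, cross3 b w⟫ = 0 := by
  simp only [cross3, PiLp.inner_apply, RCLike.inner_apply, conj_trivial, cross_apply,
    Fin.sum_univ_three, Matrix.cons_val]
  ring

theorem inner_smul_cross3_left_add_inner_smul_cross3_right (c : ℝ)
    (a b w : EuclideanSpace ℝ (Fin 3)) :
    ⟪c • cross3 a w, b⟫ + ⟪a, c • cross3 b w⟫ = 0 := by
  rw [real_inner_smul_left, real_inner_smul_right, ← mul_add,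
    inner_cross3_left_add_inner_cross3_right, mul_zero]

theorem fderiv_inner_apply_eq_zero_of_cross3 {E : Type*} [NormedAddCommGroup E]
    [NormedSpace ℝ E] {ε η : E → EuclideanSpace ℝ (Fin 3)} {p v : E}
    (hε : DifferentiableAt ℝ ε p) (hη : DifferentiableAt ℝ η p) (c : ℝ)
    (w : EuclideanSpace ℝ (Fin 3))
    (hεv : fderiv ℝ ε p v = c • cross3 (ε p) w) (hηv : fderiv ℝ η p v = c • cross3 (η p) w) :
    fderiv ℝ (fun x => ⟪ε x, η x⟫) p v = 0 := by
  rw [fderiv_inner_apply ℝ hε hη, hεv, hηv, add_comm,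
    inner_smul_cross3_left_add_inner_smul_cross3_right]

theorem ContinuousLinearMap.eq_zero_of_apply_one_zero_of_apply_zero_one {F : Type*}
    [NormedAddCommGroup F] [NormedSpace ℝ F] {L : ℝ × ℝ →L[ℝ] F}
    (h₁ : L (1, 0) = 0) (h₂ : L (0, 1) = 0) : L = 0 :=
  ContinuousLinearMap.prod_ext (ContinuousLinearMap.ext_ring h₁)
    (ContinuousLinearMap.ext_ring h₂)

theorem fderiv_inner_eq_zero_of_isHomogeneousSolutionAt
    {f ε η : ℝ × ℝ → EuclideanSpace ℝ (Fin 3)} {p : ℝ × ℝ}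
    (hεd : DifferentiableAt ℝ ε p) (hηd : DifferentiableAt ℝ η p)
    (hε : IsHomogeneousSolutionAt f ε p) (hη : IsHomogeneousSolutionAt f η p) :
    fderiv ℝ (fun x => ⟪ε x, η x⟫) p = 0 := by
  obtain ⟨hε₁, hε₂⟩ := hε
  obtain ⟨hη₁, hη₂⟩ := hη
  rw [← neg_smul] at hε₂ hη₂
  exact ContinuousLinearMap.eq_zero_of_apply_one_zero_of_apply_zero_one
    (fderiv_inner_apply_eq_zero_of_cross3 hεd hηd _ _ hε₁ hη₁)
    (fderiv_inner_apply_eq_zero_of_cross3 hεd hηd _ _ hε₂ hη₂)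

theorem inner_eq_of_isHomogeneousSolutionAt {Ω : Set (ℝ × ℝ)} (hΩ : IsOpen Ω)
    (hconn : IsPreconnected Ω) {f ε η : ℝ × ℝ → EuclideanSpace ℝ (Fin 3)}
    (hεd : DifferentiableOn ℝ ε Ω) (hηd : DifferentiableOn ℝ η Ω)
    (hε : ∀ p ∈ Ω, IsHomogeneousSolutionAt f ε p) (hη : ∀ p ∈ Ω, IsHomogeneousSolutionAt f η p)
    {p q : ℝ × ℝ} (hp : p ∈ Ω) (hq : q ∈ Ω) :
    ⟪ε p, η p⟫ = ⟪ε q, η q⟫ :=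
  hΩ.is_const_of_fderiv_eq_zero hconn (hεd.inner ℝ hηd)
    (fun x hx => fderiv_inner_eq_zero_of_isHomogeneousSolutionAt
      (hεd.differentiableAt (hΩ.mem_nhds hx)) (hηd.differentiableAt (hΩ.mem_nhds hx))
      (hε x hx) (hη x hx)) hp hq

theorem homogeneous_solutions_constant_inner_general (Ω : Set (ℝ × ℝ)) (hΩ : IsOpen Ω)
    (hconn : IsConnected Ω)
    (f : ℝ × ℝ → EuclideanSpace ℝ (Fin 3))
    (ε₁ ε₂ : ℝ × ℝ → EuclideanSpace ℝ (Fin 3))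
    (hε₁ : DifferentiableOn ℝ ε₁ Ω) (hε₂ : DifferentiableOn ℝ ε₂ Ω)
    (hε₁1 : ∀ p ∈ Ω, pd1 ε₁ p = (2 : ℝ) • cross3 (ε₁ p) (pd2 f p))
    (hε₁2 : ∀ p ∈ Ω, pd2 ε₁ p = -((2 : ℝ) • cross3 (ε₁ p) (pd1 f p)))
    (hε₂1 : ∀ p ∈ Ω, pd1 ε₂ p = (2 : ℝ) • cross3 (ε₂ p) (pd2 f p))
    (hε₂2 : ∀ p ∈ Ω, pd2 ε₂ p = -((2 : ℝ) • cross3 (ε₂ p) (pd1 f p))) :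
    ∀ p ∈ Ω, ∀ q ∈ Ω, ⟪ε₁ p, ε₂ p⟫ = ⟪ε₁ q, ε₂ q⟫ ∧ ‖ε₁ p‖ = ‖ε₁ q‖ := by
  have hsol₁ : ∀ p ∈ Ω, IsHomogeneousSolutionAt f ε₁ p := fun p hp => ⟨hε₁1 p hp, hε₁2 p hp⟩
  have hsol₂ : ∀ p ∈ Ω, IsHomogeneousSolutionAt f ε₂ p := fun p hp => ⟨hε₂1 p hp, hε₂2 p hp⟩
  intro p hp q hq
  refine ⟨inner_eq_of_isHomogeneousSolutionAt hΩ hconn.isPreconnected hε₁ hε₂ hsol₁ hsol₂ hp hq,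
    ?_⟩
  have hsq := inner_eq_of_isHomogeneousSolutionAt hΩ hconn.isPreconnected hε₁ hε₁ hsol₁ hsol₁ hp hq
  rw [real_inner_self_eq_norm_sq, real_inner_self_eq_norm_sq] at hsq
  exact (sq_eq_sq₀ (norm_nonneg _) (norm_nonneg _)).mp hsq

/-- Solutions of the homogeneous (spinning sphere) system
`∂₁ε = 2ε × ∂₂f`, `∂₂ε = −2ε × ∂₁f` on an open connected domain have constant pairwise
inner products; in particular constant length. -/
theorem homogeneous_solutions_constant_inner (Ω : Set (ℝ × ℝ)) (hΩ : IsOpen Ω)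
    (hconn : IsConnected Ω)
    (f : ℝ × ℝ → EuclideanSpace ℝ (Fin 3)) (hf : DifferentiableOn ℝ f Ω)
    (ε₁ ε₂ : ℝ × ℝ → EuclideanSpace ℝ (Fin 3))
    (hε₁ : DifferentiableOn ℝ ε₁ Ω) (hε₂ : DifferentiableOn ℝ ε₂ Ω)
    (hε₁1 : ∀ p ∈ Ω, pd1 ε₁ p = (2 : ℝ) • cross3 (ε₁ p) (pd2 f p))
    (hε₁2 : ∀ p ∈ Ω, pd2 ε₁ p = -((2 : ℝ) • cross3 (ε₁ p) (pd1 f p)))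
    (hε₂1 : ∀ p ∈ Ω, pd1 ε₂ p = (2 : ℝ) • cross3 (ε₂ p) (pd2 f p))
    (hε₂2 : ∀ p ∈ Ω, pd2 ε₂ p = -((2 : ℝ) • cross3 (ε₂ p) (pd1 f p))) :
    ∀ p ∈ Ω, ∀ q ∈ Ω, ⟪ε₁ p, ε₂ p⟫ = ⟪ε₁ q, ε₂ q⟫ ∧ ‖ε₁ p‖ = ‖ε₁ q‖ :=
  homogeneous_solutions_constant_inner_general Ω hΩ hconn f ε₁ ε₂ hε₁ hε₂ hε₁1 hε₁2 hε₂1 hε₂2
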